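/- Let V be a finite set, let J and F be finite index sets, let θ : J → ℝ satisfy θ_j ≥ 0 for every j ∈ J, and for each j ∈ J and t ∈ F let h_{j,t} : Finset V → ℝ be submodular, non-decreasing, and satisfy 0 ≤ h_{j,t}(A) ≤ 1 for all A ⊆ V. Then the set function f(A) = ∑_{j ∈ J} θ_j · (1 − ∏_{t ∈ F} (1 − h_{j,t}(A))) is submodular and non-decreasing. -/

import Mathlib

/-- A set function `f : Finset V → ℝ` is submodular: for all `A ⊆ B` and `v ∉ B`,
`f(A ∪ {v}) − f(A) ≥ f(B ∪ {v}) − f(B)`. -/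
def Submodular {V : Type*} [DecidableEq V] (f : Finset V → ℝ) : Prop :=
  ∀ A B : Finset V, A ⊆ B → ∀ v ∉ B, f (insert v B) - f B ≤ f (insert v A) - f A

/-- A set function is non-decreasing. -/
def NonDecreasing {V : Type*} (f : Finset V → ℝ) : Prop :=
  ∀ A B : Finset V, A ⊆ B → f A ≤ f B

/-!
The probability that event `j` is missed by every step is `∏_t (1 − h_{j,t})`, a product of
non-negative, non-increasing, supermodular set functions. Such products stay non-negative,
non-increasing and supermodular: the marginal gain of `f g` splits as
`f(A ∪ {v}) Δg(A) + g(A) Δf(A)`, and each term only decreases when `A` grows, since the gains are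
non-positive and the coefficients in front of them shrink. Hence `1 − ∏_t (1 − h_{j,t})` is monotone
submodular, and so is any non-negative combination of such functions.
-/

section SetFunction

variable {V : Type*} [DecidableEq V]

def Supermodular (f : Finset V → ℝ) : Prop :=
  ∀ A B : Finset V, A ⊆ B → ∀ v ∉ B, f (insert v A) - f A ≤ f (insert v B) - f B

theorem Submodular.const_sub {f : Finset V → ℝ} (hf : Submodular f) (c : ℝ) :
    Supermodular fun A => c - f A := by
  intro A B hAB v hv
  linarith [hf A B hAB v hv]

theorem Supermodular.const_sub {f : Finset V → ℝ} (hf : Supermodular f) (c : ℝ) :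
    Submodular fun A => c - f A := by
  intro A B hAB v hv
  linarith [hf A B hAB v hv]

theorem Submodular.const_mul {f : Finset V → ℝ} (hf : Submodular f) {c : ℝ} (hc : 0 ≤ c) :
    Submodular fun A => c * f A := by
  intro A B hAB v hv
  simpa only [mul_sub] using mul_le_mul_of_nonneg_left (hf A B hAB v hv) hc

theorem Submodular.finsetSum {ι : Type*} {s : Finset ι} {f : ι → Finset V → ℝ}
    (hf : ∀ i ∈ s, Submodular (f i)) : Submodular fun A => ∑ i ∈ s, f i A := by
  intro A B hAB v hv
  simp only [← Finset.sum_sub_distrib]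
  exact Finset.sum_le_sum fun i hi => hf i hi A B hAB v hv

theorem Supermodular.mul {f g : Finset V → ℝ} (hf : Supermodular f) (hg : Supermodular g)
    (hf_anti : Antitone f) (hg_anti : Antitone g) (hf0 : ∀ A, 0 ≤ f A) (hg0 : ∀ A, 0 ≤ g A) :
    Supermodular fun A => f A * g A := by
  intro A B hAB v hv
  have hvAB : insert v A ⊆ insert v B := Finset.insert_subset_insert v hAB
  have hΔf : f (insert v B) - f B ≤ 0 := sub_nonpos.2 (hf_anti (Finset.subset_insert v B))
  have hΔg : g (insert v B) - g B ≤ 0 := sub_nonpos.2 (hg_anti (Finset.subset_insert v B))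
  calc f (insert v A) * g (insert v A) - f A * g A
      = f (insert v A) * (g (insert v A) - g A) + g A * (f (insert v A) - f A) := by ring
    _ ≤ f (insert v A) * (g (insert v B) - g B) + g A * (f (insert v B) - f B) :=
        add_le_add (mul_le_mul_of_nonneg_left (hg A B hAB v hv) (hf0 _))
          (mul_le_mul_of_nonneg_left (hf A B hAB v hv) (hg0 A))
    _ ≤ f (insert v B) * (g (insert v B) - g B) + g B * (f (insert v B) - f B) :=
        add_le_add (mul_le_mul_of_nonpos_right (hf_anti hvAB) hΔg)
          (mul_le_mul_of_nonpos_right (hg_anti hAB) hΔf)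
    _ = f (insert v B) * g (insert v B) - f B * g B := by ring

theorem Supermodular.finsetProd {ι : Type*} {s : Finset ι} {g : ι → Finset V → ℝ}
    (hg : ∀ i ∈ s, Supermodular (g i)) (hg_anti : ∀ i ∈ s, Antitone (g i))
    (hg0 : ∀ i ∈ s, ∀ A, 0 ≤ g i A) : Supermodular fun A => ∏ i ∈ s, g i A := by
  classical
  induction s using Finset.induction_on with
  | empty => intro A B _ v _; simp
  | @insert x s hx ih =>
    simp only [Finset.prod_insert hx]
    simp only [Finset.mem_insert, forall_eq_or_imp] at hg hg_anti hg0
    exact hg.1.mul (ih hg.2 hg_anti.2 hg0.2) hg_anti.1 (Antitone.finsetProd hg_anti.2 hg0.2)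
      hg0.1 fun A => Finset.prod_nonneg fun i hi => hg0.2 i hi A

end SetFunction

theorem coverage_objective_monotone_submodular_general
    {V : Type*} [DecidableEq V]
    {J : Type*} [Fintype J] {F : Type*} [Fintype F]
    (θ : J → ℝ) (hθ : ∀ j : J, 0 ≤ θ j)
    (h : J → F → Finset V → ℝ)
    (hsub : ∀ (j : J) (t : F), Submodular (h j t))
    (hmono : ∀ (j : J) (t : F), NonDecreasing (h j t))
    (hrange : ∀ (j : J) (t : F) (A : Finset V), 0 ≤ h j t A ∧ h j t A ≤ 1) :
    Submodular (fun A => ∑ j : J, θ j * (1 - ∏ t : F, (1 - h j t A))) ∧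
      NonDecreasing (fun A => ∑ j : J, θ j * (1 - ∏ t : F, (1 - h j t A))) := by
  have hmiss_anti (j : J) (t : F) : Antitone fun A => 1 - h j t A :=
    fun _ _ hAB => sub_le_sub_left (hmono j t _ _ hAB) 1
  have hmiss_nonneg (j : J) (t : F) (A : Finset V) : 0 ≤ 1 - h j t A :=
    sub_nonneg.2 (hrange j t A).2
  have hcovered_sub (j : J) : Submodular fun A => 1 - ∏ t : F, (1 - h j t A) :=
    (Supermodular.finsetProd (fun t _ => (hsub j t).const_sub 1) (fun t _ => hmiss_anti j t)
      fun t _ => hmiss_nonneg j t).const_sub 1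
  have hcovered_mono (j : J) : Monotone fun A => 1 - ∏ t : F, (1 - h j t A) :=
    fun _ _ hAB => sub_le_sub_left
      (Antitone.finsetProd (fun t _ => hmiss_anti j t) (fun t _ => hmiss_nonneg j t) hAB) 1
  exact ⟨Submodular.finsetSum fun j _ => (hcovered_sub j).const_mul (hθ j),
    Monotone.finsetSum fun j _ => (hcovered_mono j).const_mul (hθ j)⟩

/-- Theorem 1 of the paper: the multi-robot multi-objective coverage objective
`f(A, θ) = ∑_j θ_j (1 − ∏_t (1 − h_{j,t}(A)))` is monotone submodular. -/
theorem coverage_objective_monotone_submodular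
    {V : Type*} [Fintype V] [DecidableEq V]
    {J : Type*} [Fintype J] {F : Type*} [Fintype F]
    (θ : J → ℝ) (hθ : ∀ j : J, 0 ≤ θ j)
    (h : J → F → Finset V → ℝ)
    (hsub : ∀ (j : J) (t : F), Submodular (h j t))
    (hmono : ∀ (j : J) (t : F), NonDecreasing (h j t))
    (hrange : ∀ (j : J) (t : F) (A : Finset V), 0 ≤ h j t A ∧ h j t A ≤ 1) :
    Submodular (fun A => ∑ j : J, θ j * (1 - ∏ t : F, (1 - h j t A))) ∧
      NonDecreasing (fun A => ∑ j : J, θ j * (1 - ∏ t : F, (1 - h j t A))) :=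
  coverage_objective_monotone_submodular_general θ hθ h hsub hmono hrange
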